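/- Let {f_j : j ∈ ℕ} ⊂ ℓ²(ℕ) be a complete Bessel system for ℓ²(ℕ) with constant B > 0, with transpose system v_i(j) = f_j(i), and let V ⊆ ℓ²(ℕ) be the closure of the span of {v_i : i ∈ ℕ} with orthonormal basis {w_k : k ∈ K} of V^⊥, where L = ℕ ⊔ K. Define e_j ∈ ℓ²(L) by e_j(i) = v_i(j) for i ∈ ℕ and e_j(k) = w_k(j) for k ∈ K. Then {e_j : j ∈ ℕ} is ω-linearly independent for ℓ²(ℕ): if c ∈ ℓ²(ℕ) and ∑_{j∈ℕ} c(j) e_j = 0 in ℓ²(L), then c = 0. -/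

import Mathlib

open scoped ComplexInnerProductSpace

/-!
Reading `∑ c j • e j = 0` coordinatewise gives `∑ c j * v i j = 0` and `∑ c j * w k j = 0`,
i.e. `star c` is orthogonal to every `v i` and every `w k`. Hence `star c` lies both in `Vᗮ`
and in the orthogonal complement of the closed span of the `w k`, which is `Vᗮᗮ`; so `star c = 0`.
-/

theorem lp.hasSum_apply {α ι : Type*} {E : α → Type*} [∀ a, NormedAddCommGroup (E a)]
    {p : ENNReal} [Fact (1 ≤ p)] {F : ι → lp E p} {s : lp E p} (hF : HasSum F s) (a : α) :
    HasSum (fun j => F j a) (s a) :=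
  Pi.hasSum.1 (hF.map (lp.coeFnAddMonoidHom E p) lp.uniformContinuous_coe.continuous) a

theorem lp.inner_star_eq_zero_of_hasSum_mul {ι 𝕜 : Type*} [RCLike 𝕜]
    {c u : lp (fun _ : ι => 𝕜) 2}
    (h : HasSum (fun j => c j * u j) 0) : inner 𝕜 u (star c) = 0 := by
  have hconj : HasSum (fun j => star (c j * u j)) 0 := by simpa using h.star
  refine (lp.hasSum_inner u (star c)).unique (hconj.congr_fun fun j => ?_)
  simp [RCLike.inner_apply]

theorem Submodule.mem_orthogonal_span_range {𝕜 E ι : Type*} [RCLike 𝕜] [NormedAddCommGroup E]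
    [InnerProductSpace 𝕜 E] {v : ι → E} {x : E} (h : ∀ i, inner 𝕜 (v i) x = 0) :
    x ∈ (span 𝕜 (Set.range v))ᗮ := by
  rw [mem_orthogonal]
  intro u hu
  induction hu using span_induction with
  | mem y hy => obtain ⟨i, rfl⟩ := hy; exact h i
  | zero => exact inner_zero_left x
  | add y z _ _ hy hz => rw [inner_add_left, hy, hz, add_zero]
  | smul a y _ hy => rw [inner_smul_left, hy, mul_zero]

theorem column_system_is_omega_independent_general
    (v : ℕ → lp (fun _ : ℕ => ℂ) 2)
    (K : Type) (w : K → lp (fun _ : ℕ => ℂ) 2)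
    (hwspan : (Submodule.span ℂ (Set.range w)).topologicalClosure =
      ((Submodule.span ℂ (Set.range v)).topologicalClosure)ᗮ)
    (e : ℕ → lp (fun _ : ℕ ⊕ K => ℂ) 2)
    (hev : ∀ j i : ℕ, e j (Sum.inl i) = v i j)
    (hew : ∀ (j : ℕ) (k : K), e j (Sum.inr k) = w k j) :
    ∀ c : lp (fun _ : ℕ => ℂ) 2,
      HasSum (fun j : ℕ => c j • e j) 0 → c = 0 := by
  intro c hsum
  have hcoord (l : ℕ ⊕ K) : HasSum (fun j => c j * e j l) 0 := by
    simpa using lp.hasSum_apply hsum l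
  set V := (Submodule.span ℂ (Set.range v)).topologicalClosure
  have hV : star c ∈ Vᗮ := by
    rw [Submodule.orthogonal_closure]
    exact Submodule.mem_orthogonal_span_range fun i =>
      lp.inner_star_eq_zero_of_hasSum_mul (by simpa [hev] using hcoord (.inl i))
  have hVperp : star c ∈ Vᗮᗮ := by
    rw [← hwspan, Submodule.orthogonal_closure]
    exact Submodule.mem_orthogonal_span_range fun k =>
      lp.inner_star_eq_zero_of_hasSum_mul (by simpa [hew] using hcoord (.inr k))
  have h := Submodule.mem_inf.2 ⟨hV, hVperp⟩
  rwa [Submodule.inf_orthogonal_eq_bot, Submodule.mem_bot, star_eq_zero] at h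

/-- **ω-linear independence of the column system built from a complete Bessel system.** Let
`{f j} ⊆ ℓ²(ℕ)` be a complete Bessel system with constant `B > 0`, with transpose rows
`v i (j) = f j (i)`, let `V` be the closure of the span of `{v i}` and `{w k}_{k ∈ K}` an
orthonormal basis of `Vᗮ`, with `L = ℕ ⊔ K`. Define the columns `e j ∈ ℓ²(L)` by
`e j (inl i) = v i (j)` and `e j (inr k) = w k (j)`. Then `{e j}` is ω-linearly independent
for `ℓ²(ℕ)`: if `c ∈ ℓ²(ℕ)` and `∑ c j • e j` converges to `0` in `ℓ²(L)`, then `c = 0`. -/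
theorem column_system_is_omega_independent
    (B : ℝ) (hB : 0 < B) (f : ℕ → lp (fun _ : ℕ => ℂ) 2)
    (hbessel : ∀ x : lp (fun _ : ℕ => ℂ) 2,
      ∑' j : ℕ, ‖(⟪x, f j⟫ : ℂ)‖ ^ 2 ≤ B * ‖x‖ ^ 2)
    (hcomplete : (Submodule.span ℂ (Set.range f)).topologicalClosure = ⊤)
    (v : ℕ → lp (fun _ : ℕ => ℂ) 2) (hv : ∀ i j : ℕ, v i j = f j i)
    (K : Type) [Countable K] (w : K → lp (fun _ : ℕ => ℂ) 2)
    (hw : Orthonormal ℂ w)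
    (hwspan : (Submodule.span ℂ (Set.range w)).topologicalClosure =
      ((Submodule.span ℂ (Set.range v)).topologicalClosure)ᗮ)
    (e : ℕ → lp (fun _ : ℕ ⊕ K => ℂ) 2)
    (hev : ∀ j i : ℕ, e j (Sum.inl i) = v i j)
    (hew : ∀ (j : ℕ) (k : K), e j (Sum.inr k) = w k j) :
    ∀ c : lp (fun _ : ℕ => ℂ) 2,
      HasSum (fun j : ℕ => c j • e j) 0 → c = 0 :=
  column_system_is_omega_independent_general v K w hwspan e hev hew
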